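/- Let g be a short sl₂-Lie superalgebra, and for homogeneous m, n, r in M := {α ∈ g : hα = α} define the triple product (m, n, r) := −[[m, f n], r]. Then (m,n,r) = −∂_{m,n}(r) + ½(m⋆n)•r, where ∂_{m,n} := ½([m, f n] − [f m, n]) acts via the adjoint action and m⋆n = [m,n], a•r = [a, f r]. -/

import Mathlib

/- The bracket `[[m, n], r]` of three `h`-eigenvectors of eigenvalue `1` has eigenvalue `3`,
so it vanishes in a short algebra. Applying the derivation `f` to `[[m, n], r] = 0` gives
`[[f m, n], r] + [[m, f n], r] + [[m, n], f r] = 0`, which rearranges to the identity. -/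

/-- The Koszul sign `(-1)^{ij}` for parities `i j : ZMod 2`. -/
noncomputable def sg (i j : ZMod 2) : ℂ := (-1 : ℂ) ^ (i.val * j.val)

/-- A short `sl₂`-Lie superalgebra: a Z/2-graded complex Lie superalgebra `(G, B)`
together with operators `E F H` satisfying the `sl₂` relations, acting by even
derivations, such that `G` is spanned by `H`-eigenvectors with eigenvalues in
`{-2,-1,0,1,2}` (which, over `ℂ`, is exactly the condition that `G` decomposes as an
`sl₂`-module into copies of the adjoint, the natural and the trivial representations,
i.e. `G ≅ sl₂⊗J ⊕ V⊗M ⊕ D`). -/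
structure ShortSL2 {G : Type} [AddCommGroup G] [Module ℂ G]
    (gr : ZMod 2 → Submodule ℂ G)
    (B : G →ₗ[ℂ] G →ₗ[ℂ] G)
    (E F H : G →ₗ[ℂ] G) : Prop where
  bracket_grade : ∀ i j : ZMod 2, ∀ a ∈ gr i, ∀ b ∈ gr j, B a b ∈ gr (i + j)
  antisymm : ∀ i j : ZMod 2, ∀ a ∈ gr i, ∀ b ∈ gr j, B a b = -(sg i j • B b a)
  jacobi : ∀ i j : ZMod 2, ∀ a ∈ gr i, ∀ b ∈ gr j, ∀ c : G,
      B a (B b c) = B (B a b) c + sg i j • B b (B a c)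
  grade_spans : ∀ x : G, ∃ x0 x1 : G, x0 ∈ gr 0 ∧ x1 ∈ gr 1 ∧ x = x0 + x1
  rel_HE : H ∘ₗ E - E ∘ₗ H = 2 • E
  rel_HF : H ∘ₗ F - F ∘ₗ H = -(2 • F)
  rel_EF : E ∘ₗ F - F ∘ₗ E = H
  derE : ∀ x y : G, E (B x y) = B (E x) y + B x (E y)
  derF : ∀ x y : G, F (B x y) = B (F x) y + B x (F y)
  derH : ∀ x y : G, H (B x y) = B (H x) y + B x (H y)
  evenE : ∀ i : ZMod 2, ∀ x ∈ gr i, E x ∈ gr i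
  evenF : ∀ i : ZMod 2, ∀ x ∈ gr i, F x ∈ gr i
  evenH : ∀ i : ZMod 2, ∀ x ∈ gr i, H x ∈ gr i
  short : ∀ x : G, ∃ x2 x1 x0 y1 y2 : G,
      H x2 = (2 : ℂ) • x2 ∧ H x1 = x1 ∧ H x0 = 0 ∧
      H y1 = (-1 : ℂ) • y1 ∧ H y2 = (-2 : ℂ) • y2 ∧ x = x2 + x1 + x0 + y1 + y2

/-- The triple product `(m,n,r) := −[[m, f n], r]` on `M = {m : H m = m}`. -/
noncomputable def trip {G : Type} [AddCommGroup G] [Module ℂ G]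
    (B : G →ₗ[ℂ] G →ₗ[ℂ] G) (F : G →ₗ[ℂ] G) (m n r : G) : G :=
  -(B (B m (F n)) r)

lemma apply_bracket_eq_add_smul_of_derivation {G : Type} [AddCommGroup G] [Module ℂ G]
    {B : G →ₗ[ℂ] G →ₗ[ℂ] G} {D : G →ₗ[ℂ] G}
    (hD : ∀ x y : G, D (B x y) = B (D x) y + B x (D y)) {a b : G} {μ ν : ℂ}
    (ha : D a = μ • a) (hb : D b = ν • b) : D (B a b) = (μ + ν) • B a b := by
  rw [hD, ha, hb, map_smul, LinearMap.smul_apply, map_smul, add_smul]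

namespace ShortSL2

variable {G : Type} [AddCommGroup G] [Module ℂ G] {gr : ZMod 2 → Submodule ℂ G}
  {B : G →ₗ[ℂ] G →ₗ[ℂ] G} {E F H : G →ₗ[ℂ] G}

/-- `H` is annihilated by `X (X - 1) (X + 1) (X - 2) (X + 2)`. -/
lemma H_quintic_eq_zero (h : ShortSL2 gr B E F H) : H ^ 5 - 5 • H ^ 3 + 4 • H = 0 := by
  ext x
  obtain ⟨x2, x1, x0, y1, y2, h2, h1, h0, k1, k2, rfl⟩ := h.short x
  simp only [LinearMap.add_apply, LinearMap.sub_apply, LinearMap.smul_apply, pow_succ,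
    pow_zero, Module.End.mul_apply, Module.End.one_apply, map_add, map_smul, map_zero,
    h2, h1, h0, k1, k2, LinearMap.zero_apply]
  module

lemma eq_zero_of_H_eq_three_smul (h : ShortSL2 gr B E F H) {x : G} (hx : H x = (3 : ℂ) • x) :
    x = 0 := by
  have hpow : ∀ k : ℕ, (H ^ k) x = (3 : ℂ) ^ k • x := by
    intro k
    induction k with
    | zero => simp
    | succ k ih => rw [pow_succ', Module.End.mul_apply, ih, map_smul, hx, smul_smul, ← pow_succ]
  have h120 : (120 : ℂ) • x = 0 := by
    have := LinearMap.congr_fun h.H_quintic_eq_zero x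
    simp only [LinearMap.add_apply, LinearMap.sub_apply, LinearMap.smul_apply, hpow, hx,
      LinearMap.zero_apply] at this
    rw [← this]
    module
  simpa using h120

end ShortSL2

/-- In a short `sl₂`-Lie superalgebra,
`(m,n,r) = −∂_{m,n}(r) + ½(m⋆n)•r`, where `∂_{m,n} = ½([m,f n] − [f m,n])` acts by the
adjoint action, `m⋆n = [m,n]`, and `a•r = [a, f r]`. -/
theorem shortSL2_trip_eq
    {G : Type} [AddCommGroup G] [Module ℂ G]
    (gr : ZMod 2 → Submodule ℂ G)
    (B : G →ₗ[ℂ] G →ₗ[ℂ] G) (E F H : G →ₗ[ℂ] G)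
    (h : ShortSL2 gr B E F H) :
    ∀ pm pn pr : ZMod 2, ∀ m ∈ gr pm, ∀ n ∈ gr pn, ∀ r ∈ gr pr,
      H m = m → H n = n → H r = r →
      trip B F m n r
        = -((2 : ℂ)⁻¹ • B (B m (F n) - B (F m) n) r)
            + (2 : ℂ)⁻¹ • B (B m n) (F r) := by
  intro _ _ _ m _ n _ r _ hm hn hr
  have eigen_one : ∀ {x : G}, H x = x → H x = (1 : ℂ) • x := fun hx => by rw [hx, one_smul]
  have hmnr : B (B m n) r = 0 := h.eq_zero_of_H_eq_three_smul <| by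
    have hmn := apply_bracket_eq_add_smul_of_derivation h.derH (eigen_one hm) (eigen_one hn)
    have := apply_bracket_eq_add_smul_of_derivation h.derH hmn (eigen_one hr)
    rwa [show (1 + 1 + 1 : ℂ) = 3 by norm_num] at this
  have hF := congrArg F hmnr
  rw [h.derF, h.derF, map_add, LinearMap.add_apply, map_zero] at hF
  rw [trip, map_sub, LinearMap.sub_apply]
  linear_combination (norm := module) (-(2 : ℂ)⁻¹) • hF
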